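/- Let W be a constant algebraic Weyl tensor on ℝ^4 and K_{ij}(x) = −(1/3) W_{μijν} x^μ x^ν / |x|^4. Then ΔK_{ij}(x) = (8/3) W_{kijl} x^k x^l / |x|^6 for all x ≠ 0, and consequently Δ²K = 0 on ℝ^4 \ {0}. -/

import Mathlib

/-- A constant 4-tensor on `ℝ⁴` with the algebraic symmetries of the Weyl tensor. -/
def IsWeyl (W : Fin 4 → Fin 4 → Fin 4 → Fin 4 → ℝ) : Prop :=
  (∀ k i j l, W k i j l = - W i k j l) ∧
  (∀ k i j l, W k i j l = - W k i l j) ∧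
  (∀ k i j l, W k i j l = W j l k i) ∧
  (∀ k i j l, W k i j l + W i j k l + W j k i l = 0) ∧
  (∀ i j, (∑ k, W k i j k) = 0)

/-- The Euclidean Laplacian of a function on `ℝ⁴`, componentwise. -/
noncomputable def lap (f : (Fin 4 → ℝ) → ℝ) (x : Fin 4 → ℝ) : ℝ :=
  ∑ k, fderiv ℝ (fun y => fderiv ℝ f y (Pi.single k 1)) x (Pi.single k 1)

/-!
The kernel is `K = Q_A · |x|^{2n}` with `n = -2`, where `Q_A` is the quadratic form of the
trace-free matrix `A_{μν} = -(1/3) W_{μijν}`. In `ℝ^d` the product rule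
`Δ(fg) = g Δf + 2 ∇f·∇g + f Δg`, together with `Δ Q_A = 2 tr A = 0`, Euler's identity
`x·∇Q_A = 2 Q_A` and `Δ |x|^{2n} = (2nd + 4n(n-1)) |x|^{2n-2}`, gives
`Δ(Q_A |x|^{2n}) = (4n² + (2d+4)n) Q_A |x|^{2n-2}`.
For `d = 4` the factor is `-8` at `n = -2` and `0` at `n = -3`, which gives both claims.
-/

open Filter Topology

variable {d : ℕ}

noncomputable def partialDeriv (k : Fin d) (f : (Fin d → ℝ) → ℝ) (x : Fin d → ℝ) : ℝ :=
  fderiv ℝ f x (Pi.single k 1)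

noncomputable def coordLaplacian (f : (Fin d → ℝ) → ℝ) (x : Fin d → ℝ) : ℝ :=
  ∑ k, partialDeriv k (partialDeriv k f) x

section partialDeriv

variable {f g : (Fin d → ℝ) → ℝ} {x : Fin d → ℝ} (k : Fin d)

theorem partialDeriv_apply (m : Fin d) :
    partialDeriv k (fun y => y m) x = (Pi.single k 1 : Fin d → ℝ) m := by
  simp [partialDeriv, (hasFDerivAt_apply m x).fderiv]

theorem partialDeriv_const (c : ℝ) : partialDeriv k (fun _ => c) x = 0 := by
  simp [partialDeriv]

theorem partialDeriv_add (hf : DifferentiableAt ℝ f x) (hg : DifferentiableAt ℝ g x) :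
    partialDeriv k (fun y => f y + g y) x = partialDeriv k f x + partialDeriv k g x := by
  simp [partialDeriv, fderiv_fun_add hf hg]

theorem partialDeriv_mul (hf : DifferentiableAt ℝ f x) (hg : DifferentiableAt ℝ g x) :
    partialDeriv k (fun y => f y * g y) x
      = partialDeriv k f x * g x + f x * partialDeriv k g x := by
  simp only [partialDeriv, fderiv_fun_mul hf hg, add_apply,
    smul_apply, smul_eq_mul]
  ring

theorem partialDeriv_const_mul (c : ℝ) (hf : DifferentiableAt ℝ f x) :
    partialDeriv k (fun y => c * f y) x = c * partialDeriv k f x := by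
  simp [partialDeriv, fderiv_const_mul hf]

theorem partialDeriv_sum {ι : Type*} (s : Finset ι) {F : ι → (Fin d → ℝ) → ℝ}
    (hF : ∀ i ∈ s, DifferentiableAt ℝ (F i) x) :
    partialDeriv k (fun y => ∑ i ∈ s, F i y) x = ∑ i ∈ s, partialDeriv k (F i) x := by
  simp [partialDeriv, fderiv_fun_sum hF]

theorem partialDeriv_zpow (n : ℤ) (hf : DifferentiableAt ℝ f x) (hfx : f x ≠ 0) :
    partialDeriv k (fun y => f y ^ n) x = n * f x ^ (n - 1) * partialDeriv k f x := by
  have h : HasFDerivAt (fun y => f y ^ n) ((n * f x ^ (n - 1)) • fderiv ℝ f x) x :=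
    (hasDerivAt_zpow n (f x) (Or.inl hfx)).comp_hasFDerivAt x hf.hasFDerivAt
  simp [partialDeriv, h.fderiv, mul_assoc]

theorem Filter.EventuallyEq.partialDeriv_eq (h : f =ᶠ[𝓝 x] g) :
    partialDeriv k f x = partialDeriv k g x := by
  rw [partialDeriv, h.fderiv_eq, partialDeriv]

theorem ContDiffAt.differentiableAt_partialDeriv (hf : ContDiffAt ℝ 2 f x) :
    DifferentiableAt ℝ (partialDeriv k f) x :=
  ((hf.fderiv_right (m := 1) (by norm_num)).clm_apply contDiffAt_const).differentiableAt
    (by norm_num)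

end partialDeriv

section coordLaplacian

variable {f g : (Fin d → ℝ) → ℝ} {x : Fin d → ℝ}

theorem coordLaplacian_congr (h : f =ᶠ[𝓝 x] g) : coordLaplacian f x = coordLaplacian g x := by
  refine Finset.sum_congr rfl fun k _ => Filter.EventuallyEq.partialDeriv_eq k ?_
  filter_upwards [h.fderiv (𝕜 := ℝ)] with y hy
  rw [partialDeriv, hy, partialDeriv]

theorem coordLaplacian_mul (hf : ContDiffAt ℝ 2 f x) (hg : ContDiffAt ℝ 2 g x) :
    coordLaplacian (fun y => f y * g y) x = coordLaplacian f x * g x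
      + 2 * ∑ k, partialDeriv k f x * partialDeriv k g x + f x * coordLaplacian g x := by
  have hf1 : DifferentiableAt ℝ f x := hf.differentiableAt (by norm_num)
  have hg1 : DifferentiableAt ℝ g x := hg.differentiableAt (by norm_num)
  have hk : ∀ k, partialDeriv k (partialDeriv k fun y => f y * g y) x
      = partialDeriv k (partialDeriv k f) x * g x
        + 2 * (partialDeriv k f x * partialDeriv k g x)
        + f x * partialDeriv k (partialDeriv k g) x := by
    intro k
    have hfk := hf.differentiableAt_partialDeriv k
    have hgk := hg.differentiableAt_partialDeriv k
    have hprod : partialDeriv k (fun y => f y * g y) =ᶠ[𝓝 x]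
        fun y => partialDeriv k f y * g y + f y * partialDeriv k g y := by
      filter_upwards [hf.eventually (by simp), hg.eventually (by simp)] with y hfy hgy
      exact partialDeriv_mul k (hfy.differentiableAt (by norm_num))
        (hgy.differentiableAt (by norm_num))
    rw [hprod.partialDeriv_eq, partialDeriv_add k (hfk.fun_mul hg1) (hf1.fun_mul hgk),
      partialDeriv_mul k hfk hg1, partialDeriv_mul k hf1 hgk]
    ring
  simp only [coordLaplacian, hk, Finset.sum_add_distrib, Finset.sum_mul, Finset.mul_sum]

end coordLaplacian

noncomputable def sqNorm (y : Fin d → ℝ) : ℝ := ∑ m, y m ^ 2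

section sqNorm

variable {x : Fin d → ℝ}

theorem sqNorm_pos (hx : x ≠ 0) : 0 < sqNorm x := by
  obtain ⟨m, hm⟩ := Function.ne_iff.mp hx
  refine Finset.sum_pos' (fun _ _ => sq_nonneg _) ⟨m, Finset.mem_univ m, ?_⟩
  simp only [Pi.zero_apply] at hm
  positivity

theorem contDiff_sqNorm {n : WithTop ℕ∞} : ContDiff ℝ n (sqNorm : (Fin d → ℝ) → ℝ) := by
  unfold sqNorm
  fun_prop

theorem partialDeriv_sqNorm (k : Fin d) : partialDeriv k sqNorm x = 2 * x k := by
  have h : ∀ m, DifferentiableAt ℝ (fun y : Fin d → ℝ => y m) x := fun m => by fun_prop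
  rw [show (sqNorm : (Fin d → ℝ) → ℝ) = fun y => ∑ m, y m * y m from
      funext fun y => by simp only [sqNorm, sq],
    partialDeriv_sum k _ fun m _ => (h m).fun_mul (h m)]
  simp [partialDeriv_mul k (h _) (h _), partialDeriv_apply, Pi.single_apply,
    Finset.sum_add_distrib, two_mul]

theorem contDiffAt_sqNorm_zpow (n : ℤ) (hx : x ≠ 0) :
    ContDiffAt ℝ 2 (fun y => sqNorm y ^ n) x := by
  have hpow : ContDiffAt ℝ 2 (fun t : ℝ => t ^ n) (sqNorm x) :=
    (analyticAt_id.zpow (sqNorm_pos hx).ne').contDiffAt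
  exact hpow.comp x contDiff_sqNorm.contDiffAt

theorem partialDeriv_sqNorm_zpow (k : Fin d) (n : ℤ) (hx : x ≠ 0) :
    partialDeriv k (fun y => sqNorm y ^ n) x = 2 * n * sqNorm x ^ (n - 1) * x k := by
  rw [partialDeriv_zpow k n ((contDiff_sqNorm (n := 1)).differentiable one_ne_zero x)
    (sqNorm_pos hx).ne', partialDeriv_sqNorm]
  ring

theorem coordLaplacian_sqNorm_zpow (n : ℤ) (hx : x ≠ 0) :
    coordLaplacian (fun y => sqNorm y ^ n) x
      = (2 * n * d + 4 * n * (n - 1)) * sqNorm x ^ (n - 1) := by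
  have hcoord : ∀ k, DifferentiableAt ℝ (fun y : Fin d → ℝ => y k) x := fun k => by fun_prop
  have hzpow : DifferentiableAt ℝ (fun y => sqNorm y ^ (n - 1)) x :=
    (contDiffAt_sqNorm_zpow (n - 1) hx).differentiableAt (by norm_num)
  have hk : ∀ k, partialDeriv k (partialDeriv k fun y => sqNorm y ^ n) x
      = 2 * n * (2 * (n - 1) * sqNorm x ^ (n - 2) * x k ^ 2 + sqNorm x ^ (n - 1)) := by
    intro k
    have hgrad : (partialDeriv k fun y => sqNorm y ^ n) =ᶠ[𝓝 x]
        fun y => 2 * n * (sqNorm y ^ (n - 1) * y k) := by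
      filter_upwards [isOpen_ne.mem_nhds hx] with y hy
      rw [partialDeriv_sqNorm_zpow k n hy]
      ring
    rw [hgrad.partialDeriv_eq, partialDeriv_const_mul k _ (hzpow.fun_mul (hcoord k)),
      partialDeriv_mul k hzpow (hcoord k), partialDeriv_apply, partialDeriv_sqNorm_zpow k _ hx]
    simp only [Pi.single_eq_same, show n - 1 - 1 = n - 2 by ring]
    push_cast
    ring
  have hs : sqNorm x ^ (n - 2) * sqNorm x = sqNorm x ^ (n - 1) := by
    rw [← zpow_add_one₀ (sqNorm_pos hx).ne']
    ring_nf
  simp only [coordLaplacian, hk, ← Finset.mul_sum, Finset.sum_add_distrib, Finset.sum_const,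
    Finset.card_univ, Fintype.card_fin, nsmul_eq_mul]
  rw [← sqNorm]
  linear_combination (4 * n * (n - 1)) * hs

end sqNorm

noncomputable def quadForm (A : Matrix (Fin d) (Fin d) ℝ) (y : Fin d → ℝ) : ℝ :=
  ∑ μ, ∑ ν, A μ ν * y μ * y ν

section quadForm

variable (A : Matrix (Fin d) (Fin d) ℝ) {x : Fin d → ℝ}

theorem quadForm_smul (c : ℝ) (y : Fin d → ℝ) : quadForm (c • A) y = c * quadForm A y := by
  simp [quadForm, Finset.mul_sum, mul_assoc]

theorem contDiff_quadForm {n : WithTop ℕ∞} : ContDiff ℝ n (quadForm A) := by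
  unfold quadForm
  fun_prop

theorem partialDeriv_quadForm (k : Fin d) :
    partialDeriv k (quadForm A) x = ∑ ν, (A k ν + A ν k) * x ν := by
  unfold quadForm
  simp (disch := fun_prop) [partialDeriv_sum, partialDeriv_mul, partialDeriv_const,
    partialDeriv_apply, Pi.single_apply, ite_mul, Finset.sum_add_distrib, add_mul]

theorem coordLaplacian_quadForm : coordLaplacian (quadForm A) x = 2 * A.trace := by
  have hk : ∀ k, partialDeriv k (quadForm A) = fun y => ∑ ν, (A k ν + A ν k) * y ν :=
    fun k => funext fun y => partialDeriv_quadForm A k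
  simp (disch := fun_prop) [coordLaplacian, hk, partialDeriv_sum, partialDeriv_const_mul,
    partialDeriv_apply, Pi.single_apply, Matrix.trace, two_mul, Finset.sum_add_distrib]

theorem sum_partialDeriv_quadForm_mul :
    ∑ k, partialDeriv k (quadForm A) x * x k = 2 * quadForm A x := by
  simp only [partialDeriv_quadForm, quadForm, add_mul, Finset.sum_mul, Finset.sum_add_distrib]
  rw [Finset.sum_comm (f := fun k ν => A ν k * x ν * x k), two_mul]
  congr 1
  exact Finset.sum_congr rfl fun _ _ => Finset.sum_congr rfl fun _ _ => by ring

theorem coordLaplacian_quadForm_mul_sqNorm_zpow (hA : A.trace = 0) (n : ℤ) (hx : x ≠ 0) :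
    coordLaplacian (fun y => quadForm A y * sqNorm y ^ n) x
      = (4 * n ^ 2 + (2 * d + 4) * n) * quadForm A x * sqNorm x ^ (n - 1) := by
  have hgrad : ∑ k, partialDeriv k (quadForm A) x * partialDeriv k (fun y => sqNorm y ^ n) x
      = 4 * n * quadForm A x * sqNorm x ^ (n - 1) := by
    calc _ = 2 * n * sqNorm x ^ (n - 1) * ∑ k, partialDeriv k (quadForm A) x * x k := by
          simp only [partialDeriv_sqNorm_zpow _ n hx, Finset.mul_sum]
          exact Finset.sum_congr rfl fun _ _ => by ring
      _ = _ := by rw [sum_partialDeriv_quadForm_mul]; ring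
  rw [coordLaplacian_mul (contDiff_quadForm A).contDiffAt (contDiffAt_sqNorm_zpow n hx),
    coordLaplacian_quadForm, hA, coordLaplacian_sqNorm_zpow n hx, hgrad]
  ring

end quadForm

theorem lap_eq_coordLaplacian : lap = coordLaplacian := rfl

/-- For `K_{ij}(x) = -(1/3) W_{μijν} xᵘ xᵛ / |x|⁴` one has
`ΔK_{ij}(x) = (8/3) W_{kijl} xᵏ xˡ / |x|⁶` on `ℝ⁴ \ {0}`, and consequently `Δ²K = 0` there. -/
theorem stmt_13 (W : Fin 4 → Fin 4 → Fin 4 → Fin 4 → ℝ) (hW : IsWeyl W) (i j : Fin 4) :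
    ∀ x : Fin 4 → ℝ, x ≠ 0 →
      (lap (fun y : Fin 4 → ℝ =>
          (-(1/3 : ℝ) * ∑ μ, ∑ ν, W μ i j ν * y μ * y ν) / (∑ m, y m ^ 2) ^ 2) x
        = (8/3 : ℝ) * (∑ k, ∑ l, W k i j l * x k * x l) / (∑ m, x m ^ 2) ^ 3) ∧
      lap (lap (fun y : Fin 4 → ℝ =>
          (-(1/3 : ℝ) * ∑ μ, ∑ ν, W μ i j ν * y μ * y ν) / (∑ m, y m ^ 2) ^ 2)) x = 0 := by
  intro x hx
  set A : Matrix (Fin 4) (Fin 4) ℝ := Matrix.of fun μ ν => W μ i j ν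
  have hA : A.trace = 0 := hW.2.2.2.2 i j
  have hQ : ∀ y, quadForm A y = ∑ μ, ∑ ν, W μ i j ν * y μ * y ν := fun _ => rfl
  have hK : (fun y : Fin 4 → ℝ =>
      (-(1/3 : ℝ) * ∑ μ, ∑ ν, W μ i j ν * y μ * y ν) / (∑ m, y m ^ 2) ^ 2)
      = fun y => quadForm ((-(1/3 : ℝ)) • A) y * sqNorm y ^ (-2 : ℤ) := by
    funext y
    rw [quadForm_smul, hQ, sqNorm, zpow_neg, div_eq_mul_inv]
    norm_cast
  have hΔK : ∀ y : Fin 4 → ℝ, y ≠ 0 →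
      coordLaplacian (fun y => quadForm ((-(1/3 : ℝ)) • A) y * sqNorm y ^ (-2 : ℤ)) y
        = quadForm ((8/3 : ℝ) • A) y * sqNorm y ^ (-3 : ℤ) := by
    intro y hy
    rw [coordLaplacian_quadForm_mul_sqNorm_zpow _ (by simp [hA]) _ hy, quadForm_smul,
      quadForm_smul, show (-2 : ℤ) - 1 = -3 by norm_num]
    push_cast
    ring
  rw [hK, lap_eq_coordLaplacian]
  refine ⟨?_, ?_⟩
  · rw [hΔK x hx, quadForm_smul, hQ, sqNorm, zpow_neg, ← div_eq_mul_inv]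
    norm_cast
  · have hlap : coordLaplacian (fun y => quadForm ((-(1/3 : ℝ)) • A) y * sqNorm y ^ (-2 : ℤ))
        =ᶠ[𝓝 x] fun y => quadForm ((8/3 : ℝ) • A) y * sqNorm y ^ (-3 : ℤ) := by
      filter_upwards [isOpen_ne.mem_nhds hx] with y hy using hΔK y hy
    rw [coordLaplacian_congr hlap, coordLaplacian_quadForm_mul_sqNorm_zpow _ (by simp [hA]) _ hx]
    norm_num
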